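/- Let H be a connected component of G \ {v} for a cut vertex v, with |V(H)| = k, such that every vertex of H has degree at most k in G and v retains at least one neighbour outside H. Then r(G) ≥ r(G \ H), where G \ H is the graph obtained by deleting all vertices of H. -/

import Mathlib

/-!
Deleting `H` changes degrees only at `v`, and `v` keeps a neighbour, so `1 / deg v` grows by at
most `1`. Each of the `|H|` vertices of `H` has degree between `1` and `|H|`, so together they
contribute at least `1` to `r(G)`.
-/

/-- The inverse degree `r(G) = ∑_v 1/deg(v)` of a finite graph. -/
noncomputable def invDeg {V : Type*} [Fintype V] (G : SimpleGraph V) : ℝ := by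
  classical exact ∑ v : V, (1 : ℝ) / (G.degree v)

open Finset

theorem one_le_sum_one_div_of_le_card {ι : Type*} {s : Finset ι} (hs : s.Nonempty) {f : ι → ℕ}
    (hpos : ∀ i ∈ s, 0 < f i) (hle : ∀ i ∈ s, f i ≤ #s) :
    1 ≤ ∑ i ∈ s, (1 : ℝ) / f i :=
  calc (1 : ℝ) = ∑ _i ∈ s, (1 : ℝ) / #s := by
        rw [sum_const, nsmul_eq_mul, mul_one_div_cancel (by exact_mod_cast hs.card_pos.ne')]
    _ ≤ ∑ i ∈ s, (1 : ℝ) / f i := sum_le_sum fun i hi =>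
        one_div_le_one_div_of_le (by exact_mod_cast hpos i hi) (by exact_mod_cast hle i hi)

namespace SimpleGraph

theorem invDeg_eq_sum {V : Type*} [Fintype V] (G : SimpleGraph V) [DecidableRel G.Adj] :
    invDeg G = ∑ v, (1 : ℝ) / G.degree v := by
  unfold invDeg
  congr!

variable {V : Type*} [Fintype V] [DecidableEq V] (G : SimpleGraph V) [DecidableRel G.Adj]

theorem invDeg_induce_compl_eq {v : V} {H : Finset V} (hv : v ∉ H)
    (hnb : ∀ u ∈ H, ∀ w : V, G.Adj u w → w ∈ H ∨ w = v) :
    invDeg (G.induce {u | u ∉ H}) = ∑ u ∈ Hᶜ, (1 : ℝ) / G.degree u +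
      (1 / (G.induce {u | u ∉ H}).degree ⟨v, hv⟩ - 1 / G.degree v) := by
  have hcompl : ∑ u ∈ Hᶜ, (1 : ℝ) / G.degree u = ∑ x : {u | u ∉ H}, (1 : ℝ) / G.degree x :=
    sum_subtype _ (fun _ => mem_compl) _
  rw [hcompl, invDeg_eq_sum, ← sub_eq_iff_eq_add', ← sum_sub_distrib,
    Fintype.sum_eq_single ⟨v, hv⟩ fun x hx => ?_]
  rw [G.degree_induce_of_neighborSet_subset fun w hw hwH =>
    (hnb w hwH x hw.symm).elim x.2 fun h => hx (Subtype.ext h), sub_self]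

theorem one_div_degree_induce_compl_sub_le (hconn : G.Connected) {v : V} {H : Finset V}
    (hv : v ∉ H) (hdeg : ∀ u ∈ H, G.degree u ≤ #H) (hout : ∃ w, G.Adj v w ∧ w ∉ H) :
    1 / ((G.induce {u | u ∉ H}).degree ⟨v, hv⟩ : ℝ) - 1 / G.degree v ≤
      ∑ u ∈ H, (1 : ℝ) / G.degree u := by
  rcases H.eq_empty_or_nonempty with hH | hH
  · have : (G.induce {u | u ∉ H}).degree ⟨v, hv⟩ = G.degree v :=
      G.degree_induce_of_neighborSet_subset fun w _ => by simp [hH]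
    simp [this, hH]
  obtain ⟨w, hvw, hw⟩ := hout
  have hv_pos : 0 < (G.induce {u | u ∉ H}).degree ⟨v, hv⟩ :=
    (degree_pos_iff_exists_adj _ _).2 ⟨⟨w, hw⟩, hvw⟩
  calc 1 / ((G.induce {u | u ∉ H}).degree ⟨v, hv⟩ : ℝ) - 1 / G.degree v
      ≤ 1 / (G.induce {u | u ∉ H}).degree ⟨v, hv⟩ := sub_le_self _ (by positivity)
    _ ≤ 1 := div_le_one_of_le₀ (by exact_mod_cast hv_pos) (by positivity)
    _ ≤ ∑ u ∈ H, (1 : ℝ) / G.degree u := one_le_sum_one_div_of_le_card hH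
        (fun u hu => (hconn.preconnected u v).degree_pos_left (ne_of_mem_of_not_mem hu hv)) hdeg

end SimpleGraph

theorem delete_component_invDeg {V : Type*} [Fintype V] [DecidableEq V]
    (G : SimpleGraph V) [DecidableRel G.Adj] (hconn : G.Connected)
    (v : V) (H : Finset V) (hv : v ∉ H)
    (hnb : ∀ u ∈ H, ∀ w : V, G.Adj u w → w ∈ H ∨ w = v)
    (hdeg : ∀ u ∈ H, G.degree u ≤ H.card)
    (hout : ∃ w : V, G.Adj v w ∧ w ∉ H) :
    invDeg (G.induce {u | u ∉ H}) ≤ invDeg G := by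
  rw [G.invDeg_induce_compl_eq hv hnb, G.invDeg_eq_sum, ← sum_compl_add_sum H]
  linarith [G.one_div_degree_induce_compl_sub_le hconn hv hdeg hout]
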